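/- arXiv:1708.01722 — 4 statements merged into one kernel-verified Lean document; each statement's English description precedes it below -/
import Mathlib

section
/- Let ζ > 0 and α > 1/2 be real numbers, and define σ_j = ζ j^{-α} for j = 1, 2, …, n. Then for every integer k with 1 ≤ k ≤ n − 1, (Σ_{j=k+1}^{n} σ_j²)^{1/2} < σ_{k+1} ((k+1)/k)^{α} √(k/(2α − 1)). -/
/-!
Since `σ_j² = ζ² j^{-2α}` with `2α > 1` is decreasing in `j`, the tail sum `Σ_{j=k+1}^n j^{-2α}` is
at most `∫_k^n x^{-2α} dx = (k^{1-2α} - n^{1-2α}) / (2α - 1) < k^{1-2α} / (2α - 1)`.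
On the other side `σ_{k+1} ((k+1)/k)^α = ζ k^{-α}`, so the right-hand side is exactly
`ζ √(k^{1-2α} / (2α - 1))`.
-/

open Finset Real

lemma integral_rpow_neg_lt_of_one_lt {p a b : ℝ} (hp : 1 < p) (ha : 0 < a) (hab : a ≤ b) :
    ∫ x in a..b, x ^ (-p) < a ^ (1 - p) / (p - 1) := by
  have hb : 0 < b ^ (1 - p) / (p - 1) :=
    div_pos (rpow_pos_of_pos (ha.trans_le hab) _) (by linarith)
  rw [integral_rpow (.inr ⟨by linarith, by simp [Set.uIcc_of_le hab, ha.not_ge]⟩),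
    show -p + 1 = 1 - p by ring]
  calc (b ^ (1 - p) - a ^ (1 - p)) / (1 - p)
      = a ^ (1 - p) / (p - 1) - b ^ (1 - p) / (p - 1) := by
        rw [← neg_sub p, div_neg, ← sub_div]; ring
    _ < a ^ (1 - p) / (p - 1) := sub_lt_self _ hb

lemma sum_Icc_rpow_neg_lt_of_one_lt {p : ℝ} (hp : 1 < p) {k : ℕ} (hk : 0 < k) (n : ℕ) :
    ∑ j ∈ Icc (k + 1) n, (j : ℝ) ^ (-p) < k ^ (1 - p) / (p - 1) := by
  have hk' : (0 : ℝ) < k := by exact_mod_cast hk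
  rcases le_or_gt n k with hnk | hkn
  · rw [Icc_eq_empty (by omega), sum_empty]
    exact div_pos (rpow_pos_of_pos hk' _) (by linarith)
  have hanti : AntitoneOn (fun x : ℝ ↦ x ^ (-p)) (Set.Icc k n) :=
    (antitoneOn_rpow_Ioi_of_exponent_nonpos (by linarith)).mono fun x hx ↦ hk'.trans_le hx.1
  calc ∑ j ∈ Icc (k + 1) n, (j : ℝ) ^ (-p)
      = ∑ i ∈ Ico k n, ((i + 1 : ℕ) : ℝ) ^ (-p) := by
        rw [sum_Ico_add' (fun j : ℕ ↦ (j : ℝ) ^ (-p)), Ico_add_one_right_eq_Icc]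
    _ ≤ ∫ x in (k : ℝ)..n, x ^ (-p) := hanti.sum_le_integral_Ico hkn.le
    _ < k ^ (1 - p) / (p - 1) := integral_rpow_neg_lt_of_one_lt hp hk' (by exact_mod_cast hkn.le)

lemma rpow_neg_mul_sqrt_div {x : ℝ} (hx : 0 < x) (a c : ℝ) :
    x ^ (-a) * √(x / c) = √(x ^ (1 - 2 * a) / c) := by
  have hpow : x ^ (1 - 2 * a) = (x ^ (-a)) ^ 2 * x := by
    rw [← rpow_mul_natCast hx.le, ← rpow_add_one hx.ne']
    ring_nf
  rw [hpow, mul_div_assoc, sqrt_mul (sq_nonneg _), sqrt_sq (rpow_nonneg hx.le _)]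

theorem tail_sum_moderately_ill_posed_general
    (ζ α : ℝ) (hζ : 0 < ζ) (hα : 1 / 2 < α) (n k : ℕ)
    (σ : ℕ → ℝ) (hσ : ∀ j, σ j = ζ * (j : ℝ) ^ (-α))
    (hk : 1 ≤ k) :
    Real.sqrt (∑ j ∈ Finset.Icc (k + 1) n, (σ j) ^ 2) <
      σ (k + 1) * (((k : ℝ) + 1) / (k : ℝ)) ^ α * Real.sqrt ((k : ℝ) / (2 * α - 1)) := by
  have hk0 : (0 : ℝ) < k := by exact_mod_cast hk
  have hk1 : (0 : ℝ) < k + 1 := by linarith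
  have hsum : ∑ j ∈ Icc (k + 1) n, σ j ^ 2 = ζ ^ 2 * ∑ j ∈ Icc (k + 1) n, (j : ℝ) ^ (-(2 * α)) := by
    rw [mul_sum]
    refine sum_congr rfl fun j _ ↦ ?_
    rw [hσ, mul_pow, ← rpow_mul_natCast (Nat.cast_nonneg j)]
    ring_nf
  have hσk : σ (k + 1) * (((k : ℝ) + 1) / k) ^ α = ζ * k ^ (-α) := by
    rw [hσ, Nat.cast_add_one, div_rpow hk1.le hk0.le, rpow_neg hk1.le, rpow_neg hk0.le]
    field_simp
  rw [hsum, hσk, mul_assoc, rpow_neg_mul_sqrt_div hk0, sqrt_mul (by positivity), sqrt_sq hζ.le]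
  gcongr
  exact sum_Icc_rpow_neg_lt_of_one_lt (by linarith) hk n

/-- Tail-sum estimate for polynomially decaying singular values
`σ_j = ζ j^{-α}` (ζ > 0, α > 1/2): for `1 ≤ k ≤ n - 1`,
`(Σ_{j=k+1}^n σ_j²)^{1/2} < σ_{k+1} ((k+1)/k)^α √(k/(2α-1))`. -/
theorem tail_sum_moderately_ill_posed
    (ζ α : ℝ) (hζ : 0 < ζ) (hα : 1 / 2 < α) (n k : ℕ)
    (σ : ℕ → ℝ) (hσ : ∀ j, σ j = ζ * (j : ℝ) ^ (-α))
    (hk : 1 ≤ k) (hkn : k < n) :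
    Real.sqrt (∑ j ∈ Finset.Icc (k + 1) n, (σ j) ^ 2) <
      σ (k + 1) * (((k : ℝ) + 1) / (k : ℝ)) ^ α * Real.sqrt ((k : ℝ) / (2 * α - 1)) :=
  tail_sum_moderately_ill_posed_general ζ α hζ hα n k σ hσ hk
end

section
/- Let n, k, q be positive integers with k + q ≤ n − 1, let ζ > 0 and α > 1/2 be real numbers, and define σ_j = ζ j^{-α} for j = 1, …, n. Suppose a real number E ≥ 0 satisfies E ≤ (1 + 16√(1 + k/(q+1))) σ_{k+1} + (8√(k+q)/(q+1)) (Σ_{j=k+1}^{n} σ_j²)^{1/2}. Then E ≤ (1 + 16√(1 + k/(q+1)) + (8√(k+q)/(q+1)) √(k/(2α−1)) ((k+1)/k)^{α}) σ_{k+1}. -/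
/-!
Since `x ↦ x^{-2α}` is decreasing and integrable at infinity for `α > 1/2`, the integral test
bounds `Σ_{j>k} σ_j²` by `ζ² ∫_k^∞ x^{-2α} dx = ζ² k^{1-2α}/(2α-1)`; the identity
`k^{-α} = ((k+1)/k)^α (k+1)^{-α}` turns the square root of this into a multiple of `σ_{k+1}`.
-/

open Real Finset

theorem sum_Icc_rpow_neg_le {s : ℝ} (hs : 1 < s) {k : ℕ} (hk : 0 < k) (n : ℕ) :
    ∑ j ∈ Icc (k + 1) n, (j : ℝ) ^ (-s) ≤ (k : ℝ) ^ (1 - s) / (s - 1) := by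
  have hk' : (0 : ℝ) < k := by exact_mod_cast hk
  have hanti : AntitoneOn (fun x : ℝ => x ^ (-s)) (Set.Icc (k : ℝ) n) := fun x hx y _ hxy =>
    rpow_le_rpow_of_nonpos (hk'.trans_le hx.1) hxy (by linarith)
  have hint : MeasureTheory.IntegrableOn (fun x : ℝ => x ^ (-s)) (Set.Ioi (k : ℝ)) :=
    integrableOn_Ioi_rpow_of_lt (by linarith) hk'
  calc ∑ j ∈ Icc (k + 1) n, (j : ℝ) ^ (-s)
      = ∑ i ∈ Ico k n, (fun x : ℝ => x ^ (-s)) ↑(i + 1) := by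
        rw [← Finset.Ico_add_one_right_eq_Icc, ← sum_Ico_add' (fun j : ℕ => (j : ℝ) ^ (-s))]
    _ ≤ ∫ x in Set.Ioi (k : ℝ), x ^ (-s) :=
        hanti.sum_Ico_le_integral hint fun x hx => rpow_nonneg (hk'.trans hx).le _
    _ = (k : ℝ) ^ (1 - s) / (s - 1) := by
        rw [integral_Ioi_rpow_of_lt (by linarith) hk', show -s + 1 = 1 - s by ring, neg_div,
          ← div_neg, neg_sub]

theorem rpow_div_self_add_one_mul_rpow_neg {x : ℝ} (hx : 0 < x) (a : ℝ) :
    ((x + 1) / x) ^ a * (x + 1) ^ (-a) = x ^ (-a) := by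
  rw [div_rpow (by positivity) hx.le, rpow_neg (by positivity), rpow_neg hx.le]
  field_simp

theorem sqrt_sum_sq_polynomial_decay_le {ζ α : ℝ} (hζ : 0 ≤ ζ) (hα : 1 / 2 < α) {k : ℕ}
    (hk : 0 < k) (n : ℕ) :
    √(∑ j ∈ Icc (k + 1) n, (ζ * (j : ℝ) ^ (-α)) ^ 2) ≤
      √((k : ℝ) / (2 * α - 1)) * (((k : ℝ) + 1) / k) ^ α * (ζ * ((k : ℝ) + 1) ^ (-α)) := by
  have hk' : (0 : ℝ) < k := by exact_mod_cast hk
  have hsq : ∀ x : ℝ, 0 ≤ x → (x ^ (-α)) ^ 2 = x ^ (-(2 * α)) := fun x hx => by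
    rw [← rpow_natCast, ← rpow_mul hx]; ring_nf
  calc √(∑ j ∈ Icc (k + 1) n, (ζ * (j : ℝ) ^ (-α)) ^ 2)
      = ζ * √(∑ j ∈ Icc (k + 1) n, (j : ℝ) ^ (-(2 * α))) := by
        simp only [mul_pow, ← mul_sum, hsq _ (Nat.cast_nonneg _)]
        rw [sqrt_mul (sq_nonneg ζ), sqrt_sq hζ]
    _ ≤ ζ * √((k : ℝ) ^ (1 - 2 * α) / (2 * α - 1)) := by
        gcongr
        exact sum_Icc_rpow_neg_le (by linarith) hk n
    _ = ζ * (√((k : ℝ) / (2 * α - 1)) * (k : ℝ) ^ (-α)) := by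
        rw [sub_eq_add_neg, rpow_add hk', rpow_one, ← hsq _ hk'.le, mul_div_right_comm,
          sqrt_mul (div_nonneg hk'.le (by linarith)), sqrt_sq (by positivity)]
    _ = _ := by
        rw [← rpow_div_self_add_one_mul_rpow_neg hk' α]; ring

theorem rsvd_error_bound_moderately_ill_posed_general
    (n k q : ℕ) (hk : 0 < k)
    (ζ α : ℝ) (hζ : 0 < ζ) (hα : 1 / 2 < α)
    (σ : ℕ → ℝ) (hσ : ∀ j, σ j = ζ * (j : ℝ) ^ (-α))
    (E : ℝ)
    (h : E ≤ (1 + 16 * Real.sqrt (1 + (k : ℝ) / ((q : ℝ) + 1))) * σ (k + 1) +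
        (8 * Real.sqrt ((k : ℝ) + (q : ℝ)) / ((q : ℝ) + 1)) *
          Real.sqrt (∑ j ∈ Finset.Icc (k + 1) n, (σ j) ^ 2)) :
    E ≤ (1 + 16 * Real.sqrt (1 + (k : ℝ) / ((q : ℝ) + 1)) +
        (8 * Real.sqrt ((k : ℝ) + (q : ℝ)) / ((q : ℝ) + 1)) *
          Real.sqrt ((k : ℝ) / (2 * α - 1)) * (((k : ℝ) + 1) / (k : ℝ)) ^ α) * σ (k + 1) := by
  have hσk : σ (k + 1) = ζ * ((k : ℝ) + 1) ^ (-α) := by rw [hσ]; push_cast; rfl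
  have htail : √(∑ j ∈ Icc (k + 1) n, σ j ^ 2) ≤
      √((k : ℝ) / (2 * α - 1)) * (((k : ℝ) + 1) / k) ^ α * σ (k + 1) := by
    simpa only [hσk, hσ] using sqrt_sum_sq_polynomial_decay_le hζ.le hα hk n
  calc E ≤ _ := h
    _ ≤ _ := by grw [htail]
    _ = _ := by ring

/-- Deterministic core of Theorem 2.2 (RSVD error bound for moderately and
mildly ill-posed problems): if `σ_j = ζ j^{-α}` with `ζ > 0`, `α > 1/2`, and
`E ≤ (1 + 16√(1 + k/(q+1))) σ_{k+1} + (8√(k+q)/(q+1)) (Σ_{j=k+1}^n σ_j²)^{1/2}`,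
then `E ≤ (1 + 16√(1 + k/(q+1)) + (8√(k+q)/(q+1)) √(k/(2α-1)) ((k+1)/k)^α) σ_{k+1}`. -/
theorem rsvd_error_bound_moderately_ill_posed
    (n k q : ℕ) (hn : 0 < n) (hk : 0 < k) (hq : 0 < q) (hkq : k + q + 1 ≤ n)
    (ζ α : ℝ) (hζ : 0 < ζ) (hα : 1 / 2 < α)
    (σ : ℕ → ℝ) (hσ : ∀ j, σ j = ζ * (j : ℝ) ^ (-α))
    (E : ℝ) (hE : 0 ≤ E)
    (h : E ≤ (1 + 16 * Real.sqrt (1 + (k : ℝ) / ((q : ℝ) + 1))) * σ (k + 1) +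
        (8 * Real.sqrt ((k : ℝ) + (q : ℝ)) / ((q : ℝ) + 1)) *
          Real.sqrt (∑ j ∈ Finset.Icc (k + 1) n, (σ j) ^ 2)) :
    E ≤ (1 + 16 * Real.sqrt (1 + (k : ℝ) / ((q : ℝ) + 1)) +
        (8 * Real.sqrt ((k : ℝ) + (q : ℝ)) / ((q : ℝ) + 1)) *
          Real.sqrt ((k : ℝ) / (2 * α - 1)) * (((k : ℝ) + 1) / (k : ℝ)) ^ α) * σ (k + 1) :=
  rsvd_error_bound_moderately_ill_posed_general n k q hk ζ α hζ hα σ hσ E h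
end

section
/- Let U be a real m×k matrix and V a real n×k matrix with orthonormal columns (UᵀU = I_k, VᵀV = I_k), S a k×k diagonal matrix with positive diagonal entries, and set Ã = U S Vᵀ. Let L be a real p×n matrix and b ∈ ℝ^m. Let P satisfy the four Moore–Penrose conditions for Ã, and let G satisfy the four Moore–Penrose conditions for L(I_n − V Vᵀ). Define x_k = P b and x_L = x_k − G L x_k. Then: (i) for every y ∈ ℝ^n, ‖Ã x_L − b‖ ≤ ‖Ã y − b‖ (Euclidean norm on ℝ^m); and (ii) for every y ∈ ℝ^n such that ‖Ã y − b‖ ≤ ‖Ã z − b‖ for all z ∈ ℝ^n, one has ‖L x_L‖ ≤ ‖L y‖ (Euclidean norm on ℝ^p). -/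
open Matrix

/-- Euclidean 2-norm of a finite real vector. -/
noncomputable def euclNorm {ι : Type*} [Fintype ι] (v : ι → ℝ) : ℝ :=
  Real.sqrt (∑ i, v i ^ 2)

lemma sumsq_eq_dot {ι : Type*} [Fintype ι] (v : ι → ℝ) : ∑ i, v i ^ 2 = v ⬝ᵥ v := by
  simp [dotProduct, sq]

lemma euclNorm_le_euclNorm {ι : Type*} [Fintype ι] {v w : ι → ℝ}
    (h : ∑ i, v i ^ 2 ≤ ∑ i, w i ^ 2) : euclNorm v ≤ euclNorm w :=
  Real.sqrt_le_sqrt h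

lemma eq_zero_of_sumsq {ι : Type*} [Fintype ι] {v : ι → ℝ}
    (h : ∑ i, v i ^ 2 = 0) : v = 0 := by
  funext i
  have := (Finset.sum_eq_zero_iff_of_nonneg (fun i _ => sq_nonneg (v i))).1 h i (Finset.mem_univ i)
  exact pow_eq_zero_iff (n := 2) (by norm_num) |>.1 this

lemma pythag {m n : ℕ} (A : Matrix (Fin m) (Fin n) ℝ) (P : Matrix (Fin n) (Fin m) ℝ)
    (h1 : A * P * A = A) (h3 : (A * P)ᵀ = A * P) (b : Fin m → ℝ) (y : Fin n → ℝ) :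
    ∑ i, (A.mulVec y - b) i ^ 2
      = (∑ i, (A.mulVec y - A.mulVec (P.mulVec b)) i ^ 2)
        + ∑ i, (A.mulVec (P.mulVec b) - b) i ^ 2 := by
  set q := A.mulVec (P.mulVec b) with hq
  have hAt : Aᵀ * (A * P) = Aᵀ := by
    calc Aᵀ * (A * P) = Aᵀ * (A * P)ᵀ := by rw [h3]
      _ = (A * P * A)ᵀ := by simp [Matrix.transpose_mul, Matrix.mul_assoc]
      _ = Aᵀ := by rw [h1]
  have hr : Aᵀ.mulVec (q - b) = 0 := by
    rw [Matrix.mulVec_sub, hq, Matrix.mulVec_mulVec, Matrix.mulVec_mulVec,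
      Matrix.mul_assoc, hAt, sub_self]
  have hcross : ∀ z : Fin n → ℝ, (A.mulVec z) ⬝ᵥ (q - b) = 0 := by
    intro z
    rw [dotProduct_comm, Matrix.dotProduct_mulVec, ← Matrix.mulVec_transpose, hr]
    simp
  have hdecomp : A.mulVec y - b = (A.mulVec y - q) + (q - b) := by abel
  have hAyq : A.mulVec y - q = A.mulVec (y - P.mulVec b) := by
    rw [Matrix.mulVec_sub, hq]
  rw [sumsq_eq_dot, sumsq_eq_dot, sumsq_eq_dot, hdecomp]
  have hc : (A.mulVec y - q) ⬝ᵥ (q - b) = 0 := by rw [hAyq]; exact hcross _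
  have hc' : (q - b) ⬝ᵥ (A.mulVec y - q) = 0 := by rw [dotProduct_comm]; exact hc
  rw [add_dotProduct, dotProduct_add, dotProduct_add, hc, hc']
  ring

/-- Theorem 3.3: with `Ã = U S Vᵀ` a rank-k truncated SVD, `P = Ã⁺`,
`G = (L(I - V Vᵀ))⁺`, `x_k = P b` and `x_L = x_k - G L x_k`, the vector `x_L`
minimizes `‖Ã x - b‖` and, among all such minimizers, minimizes `‖L x‖`. -/
theorem mtrsvd_solution_formula
    (m n p k : ℕ)
    (U : Matrix (Fin m) (Fin k) ℝ) (V : Matrix (Fin n) (Fin k) ℝ)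
    (hU : Uᵀ * U = 1) (hV : Vᵀ * V = 1)
    (d : Fin k → ℝ) (hd : ∀ i, 0 < d i)
    (Atil : Matrix (Fin m) (Fin n) ℝ) (hAtil : Atil = U * Matrix.diagonal d * Vᵀ)
    (L : Matrix (Fin p) (Fin n) ℝ) (b : Fin m → ℝ)
    (P : Matrix (Fin n) (Fin m) ℝ)
    (hP1 : Atil * P * Atil = Atil) (hP2 : P * Atil * P = P)
    (hP3 : (Atil * P)ᵀ = Atil * P) (hP4 : (P * Atil)ᵀ = P * Atil)
    (G : Matrix (Fin n) (Fin p) ℝ)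
    (hG1 : (L * (1 - V * Vᵀ)) * G * (L * (1 - V * Vᵀ)) = L * (1 - V * Vᵀ))
    (hG2 : G * (L * (1 - V * Vᵀ)) * G = G)
    (hG3 : ((L * (1 - V * Vᵀ)) * G)ᵀ = (L * (1 - V * Vᵀ)) * G)
    (hG4 : (G * (L * (1 - V * Vᵀ)))ᵀ = G * (L * (1 - V * Vᵀ)))
    (xk xL : Fin n → ℝ)
    (hxk : xk = P.mulVec b)
    (hxL : xL = xk - G.mulVec (L.mulVec xk)) :
    (∀ y : Fin n → ℝ, euclNorm (Atil.mulVec xL - b) ≤ euclNorm (Atil.mulVec y - b)) ∧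
    (∀ y : Fin n → ℝ,
      (∀ z : Fin n → ℝ, euclNorm (Atil.mulVec y - b) ≤ euclNorm (Atil.mulVec z - b)) →
      euclNorm (L.mulVec xL) ≤ euclNorm (L.mulVec y)) := by
  set M : Matrix (Fin p) (Fin n) ℝ := L * (1 - V * Vᵀ) with hM
  -- Vᵀ * G = 0
  have hMV : M * V = 0 := by
    rw [hM, Matrix.mul_assoc, Matrix.sub_mul, Matrix.one_mul, Matrix.mul_assoc, hV,
      Matrix.mul_one, sub_self, Matrix.mul_zero]
  have hVG : Vᵀ * G = 0 := by
    calc Vᵀ * G = Vᵀ * (G * M * G) := by rw [hG2]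
      _ = Vᵀ * ((G * M)ᵀ * G) := by rw [hG4]
      _ = Vᵀ * (Mᵀ * Gᵀ * G) := by rw [Matrix.transpose_mul]
      _ = (M * V)ᵀ * (Gᵀ * G) := by
            rw [← Matrix.transpose_mul]
            simp [Matrix.mul_assoc]
      _ = 0 := by rw [hMV]; simp
  have hAG : Atil * G = 0 := by
    rw [hAtil, Matrix.mul_assoc, hVG, Matrix.mul_zero]
  have hLG : L * G = M * G := by
    rw [hM, Matrix.mul_assoc, Matrix.sub_mul, Matrix.one_mul, Matrix.mul_assoc, hVG,
      Matrix.mul_zero, sub_zero]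
  -- Atil xL = Atil xk
  have hAxL : Atil.mulVec xL = Atil.mulVec xk := by
    rw [hxL, Matrix.mulVec_sub, Matrix.mulVec_mulVec, hAG]
    simp
  have hAxk : Atil.mulVec xk = Atil.mulVec (P.mulVec b) := by rw [hxk]
  -- part (i)
  have part1 : ∀ y : Fin n → ℝ,
      euclNorm (Atil.mulVec xL - b) ≤ euclNorm (Atil.mulVec y - b) := by
    intro y
    apply euclNorm_le_euclNorm
    rw [pythag Atil P hP1 hP3 b y]
    have hrw : Atil.mulVec xL - b = Atil.mulVec (P.mulVec b) - b := by
      rw [hAxL, hAxk]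
    rw [hrw]
    have := Finset.sum_nonneg (fun i (_ : i ∈ Finset.univ) =>
      sq_nonneg ((Atil.mulVec y - Atil.mulVec (P.mulVec b)) i))
    linarith
  refine ⟨part1, ?_⟩
  intro y hy
  -- y and xL have equal residual norms, hence equal sums of squares
  have h1 : euclNorm (Atil.mulVec y - b) = euclNorm (Atil.mulVec xL - b) :=
    le_antisymm (hy xL) (part1 y)
  have hs : ∑ i, (Atil.mulVec y - b) i ^ 2 = ∑ i, (Atil.mulVec xL - b) i ^ 2 := by
    have n1 : (0:ℝ) ≤ ∑ i, (Atil.mulVec y - b) i ^ 2 :=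
      Finset.sum_nonneg (fun i _ => sq_nonneg _)
    have n2 : (0:ℝ) ≤ ∑ i, (Atil.mulVec xL - b) i ^ 2 :=
      Finset.sum_nonneg (fun i _ => sq_nonneg _)
    have := h1
    unfold euclNorm at this
    exact (Real.sqrt_inj n1 n2).1 this
  -- from pythag, Atil y = Atil xk
  have hAy : Atil.mulVec y = Atil.mulVec xk := by
    have hp := pythag Atil P hP1 hP3 b y
    have hrw : Atil.mulVec xL - b = Atil.mulVec (P.mulVec b) - b := by
      rw [hAxL, hAxk]
    rw [hs, hrw] at hp
    have hz : ∑ i, (Atil.mulVec y - Atil.mulVec (P.mulVec b)) i ^ 2 = 0 := by linarith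
    have := eq_zero_of_sumsq hz
    rw [← hAxk] at this
    exact sub_eq_zero.1 this
  -- deduce Vᵀ y = Vᵀ xk
  have hDD : (Matrix.diagonal fun i => (d i)⁻¹) * Matrix.diagonal d = 1 := by
    rw [Matrix.diagonal_mul_diagonal]
    have : (fun i => (d i)⁻¹ * d i) = fun _ => (1:ℝ) := by
      funext i; exact inv_mul_cancel₀ (hd i).ne'
    rw [this, Matrix.diagonal_one]
  have hDUA : (Matrix.diagonal (fun i => (d i)⁻¹) * Uᵀ) * Atil = Vᵀ := by
    calc (Matrix.diagonal (fun i => (d i)⁻¹) * Uᵀ) * Atil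
        = Matrix.diagonal (fun i => (d i)⁻¹) * ((Uᵀ * U) * (Matrix.diagonal d * Vᵀ)) := by
          rw [hAtil]; simp [Matrix.mul_assoc]
      _ = (Matrix.diagonal (fun i => (d i)⁻¹) * Matrix.diagonal d) * Vᵀ := by
          rw [hU, Matrix.one_mul, Matrix.mul_assoc]
      _ = Vᵀ := by rw [hDD, Matrix.one_mul]
  have hVt : ∀ v : Fin n → ℝ, Vᵀ.mulVec v
      = (Matrix.diagonal fun i => (d i)⁻¹).mulVec (Uᵀ.mulVec (Atil.mulVec v)) := by
    intro v
    rw [Matrix.mulVec_mulVec, Matrix.mulVec_mulVec, hDUA]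
  have hVy : Vᵀ.mulVec y = Vᵀ.mulVec xk := by
    rw [hVt y, hVt xk, hAy]
  set w : Fin n → ℝ := y - xk with hw
  have hVw : Vᵀ.mulVec w = 0 := by
    rw [hw, Matrix.mulVec_sub, hVy, sub_self]
  have hQw : (1 - V * Vᵀ).mulVec w = w := by
    rw [Matrix.sub_mulVec, Matrix.one_mulVec, ← Matrix.mulVec_mulVec, hVw,
      Matrix.mulVec_zero, sub_zero]
  have hMw : M.mulVec w = L.mulVec w := by
    rw [hM, ← Matrix.mulVec_mulVec, hQw]
  -- express L y and L xL
  set c : Fin p → ℝ := L.mulVec xk with hc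
  have hLy : L.mulVec y = M.mulVec w - (-c) := by
    have : y = xk + w := by rw [hw]; abel
    rw [this, Matrix.mulVec_add, hMw, hc]; abel
  have h5 : ∀ u : Fin p → ℝ, M.mulVec (G.mulVec u) = L.mulVec (G.mulVec u) := by
    intro u
    rw [Matrix.mulVec_mulVec, Matrix.mulVec_mulVec, hLG]
  have hLxL : L.mulVec xL = M.mulVec (G.mulVec (-c)) - (-c) := by
    rw [hxL, Matrix.mulVec_sub, Matrix.mulVec_neg, Matrix.mulVec_neg, h5 c, ← hc]
    abel
  -- apply pythag for M, G with rhs -c and point w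
  apply euclNorm_le_euclNorm
  have hp := pythag M G hG1 hG3 (-c) w
  rw [hLy, hLxL, hp]
  have := Finset.sum_nonneg (fun i (_ : i ∈ Finset.univ) =>
    sq_nonneg ((M.mulVec w - M.mulVec (G.mulVec (-c))) i))
  linarith
end

section
/- Let Q be a real m×l matrix with orthonormal columns (QᵀQ = I_l), let A be a real m×n matrix, and let C be any real l×n matrix. Then ‖A − Q C‖ ≤ ‖QᵀA − C‖ + ‖A − Q QᵀA‖, where ‖·‖ denotes the spectral norm (the operator norm induced by Euclidean vector norms). In particular, if C = B_k has rank at most k and attains inf{‖QᵀA − M‖ : rank(M) ≤ k}, then the rank-k truncated RSVD approximation Ã_k = Q B_k satisfies ‖A − Ã_k‖ ≤ σ̃_{k+1} + ‖A − Q QᵀA‖, where σ̃_{k+1} = inf{‖QᵀA − M‖ : rank(M) ≤ k} is the (k+1)-th singular value of QᵀA. -/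
open Matrix

/-- Spectral norm of a real matrix: the operator norm of the induced linear
map between Euclidean spaces. -/
noncomputable def specNorm {a b : ℕ} (M : Matrix (Fin a) (Fin b) ℝ) : ℝ :=
  ‖LinearMap.toContinuousLinearMap (Matrix.toEuclideanLin M)‖

open scoped Matrix.Norms.L2Operator in
lemma specNorm_eq_l2 {a b : ℕ} (M : Matrix (Fin a) (Fin b) ℝ) : specNorm M = ‖M‖ := rfl

open scoped Matrix.Norms.L2Operator in
lemma main_ineq (m n l : ℕ)
    (Q : Matrix (Fin m) (Fin l) ℝ) (hQ : Qᵀ * Q = 1)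
    (A : Matrix (Fin m) (Fin n) ℝ) (C : Matrix (Fin l) (Fin n) ℝ) :
    specNorm (A - Q * C) ≤ specNorm (Qᵀ * A - C) + specNorm (A - Q * (Qᵀ * A)) := by
  simp only [specNorm_eq_l2]
  have hQnorm : ‖Q‖ ≤ 1 := by
    have h1 : ‖Qᴴ * Q‖ = ‖Q‖ * ‖Q‖ := Matrix.l2_opNorm_conjTranspose_mul_self Q
    have hHT : Qᴴ = Qᵀ := by ext i j; simp [Matrix.conjTranspose_apply]
    rw [hHT, hQ] at h1
    have hone : ‖(1 : Matrix (Fin l) (Fin l) ℝ)‖ ≤ 1 := by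
      rw [Matrix.cstar_norm_def, _root_.map_one]
      exact ContinuousLinearMap.norm_id_le
    nlinarith [norm_nonneg Q]
  have hdecomp : A - Q * C = Q * (Qᵀ * A - C) + (A - Q * (Qᵀ * A)) := by
    rw [Matrix.mul_sub]
    abel
  rw [hdecomp]
  calc ‖Q * (Qᵀ * A - C) + (A - Q * (Qᵀ * A))‖
      ≤ ‖Q * (Qᵀ * A - C)‖ + ‖A - Q * (Qᵀ * A)‖ := norm_add_le _ _
    _ ≤ ‖Qᵀ * A - C‖ + ‖A - Q * (Qᵀ * A)‖ := by
        have := Matrix.l2_opNorm_mul Q (Qᵀ * A - C)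
        have h2 : ‖Q‖ * ‖Qᵀ * A - C‖ ≤ ‖Qᵀ * A - C‖ := by
          nlinarith [norm_nonneg (Qᵀ * A - C)]
        linarith

/-- Bound (3.5) of Theorem 3.2: if `Q` has orthonormal columns then for any `C`,
`‖A - Q C‖ ≤ ‖QᵀA - C‖ + ‖A - Q QᵀA‖`; in particular, if `C = B_k` has rank at
most `k` and attains `σ̃_{k+1} = inf {‖QᵀA - M‖ : rank M ≤ k}`, then the rank-k
truncated RSVD approximation `Ã_k = Q B_k` satisfies
`‖A - Ã_k‖ ≤ σ̃_{k+1} + ‖A - Q QᵀA‖`. -/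
theorem trsvd_truncation_error_bound
    (m n l k : ℕ)
    (Q : Matrix (Fin m) (Fin l) ℝ) (hQ : Qᵀ * Q = 1)
    (A : Matrix (Fin m) (Fin n) ℝ) (C : Matrix (Fin l) (Fin n) ℝ) :
    specNorm (A - Q * C) ≤ specNorm (Qᵀ * A - C) + specNorm (A - Q * (Qᵀ * A)) ∧
    (C.rank ≤ k →
      specNorm (Qᵀ * A - C) =
        sInf {r : ℝ | ∃ M : Matrix (Fin l) (Fin n) ℝ, M.rank ≤ k ∧
          r = specNorm (Qᵀ * A - M)} →
      specNorm (A - Q * C) ≤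
        sInf {r : ℝ | ∃ M : Matrix (Fin l) (Fin n) ℝ, M.rank ≤ k ∧
          r = specNorm (Qᵀ * A - M)} + specNorm (A - Q * (Qᵀ * A))) := by
  refine ⟨main_ineq m n l Q hQ A C, fun _ hinf => ?_⟩
  rw [← hinf]
  exact main_ineq m n l Q hQ A C
end
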